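/- arXiv:2506.16414 — 6 statements merged into one kernel-verified Lean document; each statement's English description precedes it below -/
import Mathlib

section
/- For even n ≥ 2, the permutation β_π has order exactly n in the symmetric group S_n; i.e., β_π^n = id and β_π^k ≠ id for 1 ≤ k < n. -/
/-
For even `n`, `β_π` is a single `n`-cycle through `1`: its orbit runs up the even numbers
`1, 2, 4, …, n` and back down the odd ones `n - 1, n - 3, …, 3`. Listing this orbit explicitly,
`β_π` acts on it as the shift `j ↦ j + 1`, and the list first returns to `1` at position `n`.
-/

/-- The permutator `β_π` on `{1,…,n}` (1-indexed): `β_π(1)=2`, `β_π(n)=n-1`,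
and `β_π(i)=i+2·(-1)^i` for `1<i<n`. -/
def betaPi (n : ℕ) (i : ℕ) : ℕ :=
  if i = 1 then 2 else if i = n then n - 1 else if Even i then i + 2 else i - 2

def betaPiOrbit (n j : ℕ) : ℕ :=
  if j = 0 then 1 else if j ≤ n / 2 then 2 * j else 2 * n + 1 - 2 * j

section

variable {n : ℕ}

lemma betaPi_betaPiOrbit (hn : Even n) {j : ℕ} (hj : j < n) :
    betaPi n (betaPiOrbit n j) = betaPiOrbit n (j + 1) := by
  rw [Nat.even_iff] at hn
  unfold betaPi betaPiOrbit
  split_ifs <;> simp_all [Nat.even_iff] <;> omega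

lemma iterate_betaPi_one (hn : Even n) {k : ℕ} (hk : k ≤ n) :
    (betaPi n)^[k] 1 = betaPiOrbit n k := by
  induction k with
  | zero => simp [betaPiOrbit]
  | succ k ih =>
    rw [Function.iterate_succ_apply', ih (by omega), betaPi_betaPiOrbit hn (by omega)]

lemma exists_betaPiOrbit_eq (hn : Even n) {i : ℕ} (hi : i ∈ Set.Icc 1 n) :
    ∃ j ≤ n, betaPiOrbit n j = i := by
  rw [Nat.even_iff] at hn
  obtain ⟨hi1, hin⟩ := hi
  by_cases hi2 : i % 2 = 0
  · refine ⟨i / 2, by omega, ?_⟩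
    unfold betaPiOrbit; split_ifs <;> omega
  · refine ⟨n - i / 2, by omega, ?_⟩
    unfold betaPiOrbit; split_ifs <;> omega

lemma isPeriodicPt_betaPi_one (hn : Even n) : Function.IsPeriodicPt (betaPi n) n 1 := by
  change (betaPi n)^[n] 1 = 1
  rw [iterate_betaPi_one hn le_rfl]
  unfold betaPiOrbit; split_ifs <;> omega

lemma iterate_betaPi_one_ne_one (hn : Even n) {k : ℕ} (hk0 : 0 < k) (hkn : k < n) :
    (betaPi n)^[k] 1 ≠ 1 := by
  rw [iterate_betaPi_one hn hkn.le]
  unfold betaPiOrbit; split_ifs <;> omega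

end

theorem betaPi_order_general (n : ℕ) (heven : Even n) :
    (∀ i ∈ Set.Icc 1 n, (betaPi n)^[n] i = i) ∧
    (∀ k, 1 ≤ k → k < n → ∃ i ∈ Set.Icc 1 n, (betaPi n)^[k] i ≠ i) := by
  constructor
  · intro i hi
    obtain ⟨j, hj, rfl⟩ := exists_betaPiOrbit_eq heven hi
    rw [← iterate_betaPi_one heven hj]
    exact (isPeriodicPt_betaPi_one heven).apply_iterate j
  · intro k hk1 hkn
    exact ⟨1, ⟨le_rfl, by omega⟩, iterate_betaPi_one_ne_one heven hk1 hkn⟩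

/-- For even `n ≥ 2`, `β_π` has order exactly `n`: `β_π^n = id` on `{1,…,n}`
and `β_π^k ≠ id` for `1 ≤ k < n`. -/
theorem betaPi_order (n : ℕ) (hn : 2 ≤ n) (heven : Even n) :
    (∀ i ∈ Set.Icc 1 n, (betaPi n)^[n] i = i) ∧
    (∀ k, 1 ≤ k → k < n → ∃ i ∈ Set.Icc 1 n, (betaPi n)^[k] i ≠ i) :=
  betaPi_order_general n heven
end

section
/- For even n ≥ 2, the (n/2)-th power of β_π equals the order-reversing involution i ↦ n + 1 - i. -/
/-- The `j`-th element (index read mod `n`) of the cycle `1 → 2 → 4 → ⋯ → n → n-1 → ⋯ → 3`. -/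
def betaPiCycle (n j : ℕ) : ℕ :=
  if j % n = 0 then 1 else if j % n ≤ n / 2 then 2 * (j % n) else 2 * (n - j % n) + 1

section

variable {n : ℕ}

theorem betaPi_betaPiCycle (hn : 0 < n) (he : Even n) (j : ℕ) :
    betaPi n (betaPiCycle n j) = betaPiCycle n (j + 1) := by
  have hn2 : n % 2 = 0 := Nat.even_iff.mp he
  have hj : j % n < n := Nat.mod_lt j hn
  have hsucc : (j + 1) % n = if j % n + 1 = n then 0 else j % n + 1 := by
    rw [Nat.add_mod, Nat.one_mod_eq_one.mpr (by omega)]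
    split_ifs with h
    · rw [h, Nat.mod_self]
    · exact Nat.mod_eq_of_lt (by omega)
  unfold betaPi betaPiCycle
  rw [hsucc]
  split_ifs <;> simp_all [Nat.even_iff] <;> omega

theorem iterate_betaPi_betaPiCycle (hn : 0 < n) (he : Even n) (k j : ℕ) :
    (betaPi n)^[k] (betaPiCycle n j) = betaPiCycle n (j + k) := by
  have hsemi : Function.Semiconj (betaPiCycle n) Nat.succ (betaPi n) := fun j =>
    (betaPi_betaPiCycle hn he j).symm
  rw [← hsemi.iterate_right k j, Nat.succ_iterate]

theorem betaPiCycle_add_half (hn : 0 < n) (he : Even n) (j : ℕ) :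
    betaPiCycle n (j + n / 2) = n + 1 - betaPiCycle n j := by
  have hn2 : n % 2 = 0 := Nat.even_iff.mp he
  have hj : j % n < n := Nat.mod_lt j hn
  have hshift : (j + n / 2) % n = if j % n < n / 2 then j % n + n / 2 else j % n - n / 2 := by
    rw [Nat.add_mod, Nat.mod_eq_of_lt (show n / 2 < n by omega)]
    split_ifs with h
    · exact Nat.mod_eq_of_lt (by omega)
    · rw [Nat.mod_eq_sub_mod (by omega), Nat.mod_eq_of_lt (by omega)]
      omega
  unfold betaPiCycle
  rw [hshift]
  split_ifs <;> omega

theorem exists_betaPiCycle_eq (he : Even n) {i : ℕ} (hi : i ∈ Set.Icc 1 n) :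
    ∃ j, betaPiCycle n j = i := by
  obtain ⟨h1, hin⟩ := hi
  have hn2 : n % 2 = 0 := Nat.even_iff.mp he
  rcases Nat.even_or_odd i with hie | hio
  · have hi2 : i % 2 = 0 := Nat.even_iff.mp hie
    refine ⟨i / 2, ?_⟩
    unfold betaPiCycle
    rw [Nat.mod_eq_of_lt (by omega)]
    split_ifs <;> omega
  · have hi2 : i % 2 = 1 := Nat.odd_iff.mp hio
    refine ⟨n - (i - 1) / 2, ?_⟩
    unfold betaPiCycle
    rcases Nat.eq_zero_or_pos ((i - 1) / 2) with h0 | hpos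
    · rw [h0, Nat.sub_zero, Nat.mod_self]
      simp only [if_true]
      omega
    · rw [Nat.mod_eq_of_lt (by omega)]
      split_ifs <;> omega

end

theorem betaPi_half_power_general (n : ℕ) (heven : Even n) :
    ∀ i ∈ Set.Icc 1 n, (betaPi n)^[n / 2] i = n + 1 - i := by
  intro i hi
  have hn : 0 < n := Nat.lt_of_lt_of_le hi.1 hi.2
  obtain ⟨j, rfl⟩ := exists_betaPiCycle_eq heven hi
  rw [iterate_betaPi_betaPiCycle hn heven, betaPiCycle_add_half hn heven]

/-- For even `n ≥ 2`, the `(n/2)`-th power of `β_π` is the order-reversing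
involution `i ↦ n + 1 - i` on `{1,…,n}`. -/
theorem betaPi_half_power (n : ℕ) (hn : 2 ≤ n) (heven : Even n) :
    ∀ i ∈ Set.Icc 1 n, (betaPi n)^[n / 2] i = n + 1 - i :=
  betaPi_half_power_general n heven
end

section
/- For even n ≥ 2, β_π is an n-cycle: the orbit of 1 under β_π is all of {1,...,n}. -/
section BetaPi

variable {n i : ℕ}

theorem betaPi_of_even (hi : Even i) (hin : i ≠ n) : betaPi n i = i + 2 := by
  have hi1 : i ≠ 1 := by rintro rfl; exact Nat.not_even_one hi
  simp only [betaPi, if_neg hi1, if_neg hin, if_pos hi]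

theorem betaPi_of_odd (hi : Odd i) (hi1 : i ≠ 1) (hin : i ≠ n) : betaPi n i = i - 2 := by
  simp only [betaPi, if_neg hi1, if_neg hin, if_neg (Nat.not_even_iff_odd.mpr hi)]

theorem betaPi_self (hn : n ≠ 1) : betaPi n n = n - 1 := by
  simp only [betaPi, if_neg hn, if_true]

theorem iterate_betaPi_one_of_two_mul_le {k : ℕ} (hk : 1 ≤ k) (hkn : 2 * k ≤ n) :
    (betaPi n)^[k] 1 = 2 * k := by
  induction k, hk using Nat.le_induction with
  | base => rfl
  | succ k hk ih =>
    rw [Function.iterate_succ_apply', ih (by omega), betaPi_of_even (even_two_mul k) (by omega)]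
    ring

theorem iterate_betaPi_one_add_half {h m : ℕ} (hm : 1 ≤ m) (hmh : m < h) :
    (betaPi (2 * h))^[h + m] 1 = 2 * (h - m) + 1 := by
  induction m, hm using Nat.le_induction with
  | base =>
    rw [Function.iterate_succ_apply', iterate_betaPi_one_of_two_mul_le (by omega) le_rfl,
      betaPi_self (by omega)]
    omega
  | succ m hm ih =>
    rw [← add_assoc, Function.iterate_succ_apply', ih (by omega),
      betaPi_of_odd (odd_two_mul_add_one _) (by omega) (by omega)]
    omega

end BetaPi

theorem betaPi_cycle_general (n : ℕ) (heven : Even n) :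
    ∀ j ∈ Set.Icc 1 n, ∃ k < n, (betaPi n)^[k] 1 = j := by
  obtain ⟨h, rfl⟩ := heven
  rw [← two_mul]
  rintro j ⟨hj1, hjn⟩
  obtain ⟨i, rfl | rfl⟩ := Nat.even_or_odd' j
  · exact ⟨i, by omega, iterate_betaPi_one_of_two_mul_le (by omega) hjn⟩
  · rcases Nat.eq_zero_or_pos i with rfl | hi
    · exact ⟨0, by omega, rfl⟩
    · have hiter := iterate_betaPi_one_add_half (h := h) (m := h - i) (by omega) (by omega)
      rw [Nat.sub_sub_self (by omega)] at hiter
      exact ⟨h + (h - i), by omega, hiter⟩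

/-- For even `n ≥ 2`, `β_π` is an `n`-cycle: the orbit of `1` is all of `{1,…,n}`. -/
theorem betaPi_cycle (n : ℕ) (hn : 2 ≤ n) (heven : Even n) :
    ∀ j ∈ Set.Icc 1 n, ∃ k < n, (betaPi n)^[k] 1 = j :=
  betaPi_cycle_general n heven
end

section
/- The 6×6 matrix B with rows (1,2,3,4,5,6), (2,4,6,1,3,5), (3,6,2,5,1,4), (4,1,5,2,6,3), (5,3,1,6,4,2), (6,5,4,3,2,1) is harmonic and is not isomorphic to A_μ^(6) with rows (1,2,3,4,5,6), (2,4,1,6,3,5), (3,1,5,2,6,4), (4,6,2,5,1,3), (5,3,6,1,4,2), (6,5,4,3,2,1): there exist no permutations σ, τ ∈ S_6 with B(τ(i), j) = σ(A(i,j)) for all i, j. -/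
/-- `M` (1-indexed, entries in `{1,…,n}`) is a harmonic matrix of order `n`:
each row is a permutation of `{1,…,n}` and each directed pair `(a,b)`, `a ≠ b`,
occurs exactly once as a horizontally adjacent pair. -/
def IsHarmonic (n : ℕ) (M : ℕ → ℕ → ℕ) : Prop :=
  (∀ i ∈ Finset.Icc 1 n, ∀ v ∈ Finset.Icc 1 n,
      ∃! j, j ∈ Finset.Icc 1 n ∧ M i j = v) ∧
  (∀ a ∈ Finset.Icc 1 n, ∀ b ∈ Finset.Icc 1 n, a ≠ b →
      ∃! p : ℕ × ℕ, p.1 ∈ Finset.Icc 1 n ∧ p.2 ∈ Finset.Icc 1 (n - 1) ∧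
        M p.1 p.2 = a ∧ M p.1 (p.2 + 1) = b)

def A6 : ℕ → ℕ → ℕ := fun i j =>
  (([[1,2,3,4,5,6],[2,4,1,6,3,5],[3,1,5,2,6,4],
     [4,6,2,5,1,3],[5,3,6,1,4,2],[6,5,4,3,2,1]] : List (List ℕ)).getD (i-1) []).getD (j-1) 0

def B6 : ℕ → ℕ → ℕ := fun i j =>
  (([[1,2,3,4,5,6],[2,4,6,1,3,5],[3,6,2,5,1,4],
     [4,1,5,2,6,3],[5,3,1,6,4,2],[6,5,4,3,2,1]] : List (List ℕ)).getD (i-1) []).getD (j-1) 0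

/-!
The rows of `B6` are the maps `j ↦ i * j mod 7`, so for any two rows the permutation
`B6 r₁⁻¹ ∘ B6 r₂` is again a multiplication map of `ℤ/7`. An isomorphism from `A6` to `B6`
reads off `σ` from the identity row of `A6`, and would then exhibit row 2 of `A6`,
`(2,4,1,6,3,5)`, as such a map `B6 r₁⁻¹ ∘ B6 r₂`; it is not one.
-/

theorem existsUnique_mem_and_iff {α : Type*} {s : Finset α} {p : α → Prop} :
    (∃! x, x ∈ s ∧ p x) ↔ ∃ x ∈ s, p x ∧ ∀ y ∈ s, p y → y = x := by
  constructor
  · rintro ⟨x, ⟨hx, hpx⟩, huniq⟩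
    exact ⟨x, hx, hpx, fun y hy hpy => huniq y ⟨hy, hpy⟩⟩
  · rintro ⟨x, hx, hpx, huniq⟩
    exact ⟨x, ⟨hx, hpx⟩, fun y ⟨hy, hpy⟩ => huniq y hy hpy⟩

theorem isHarmonic_iff {n : ℕ} {M : ℕ → ℕ → ℕ} :
    IsHarmonic n M ↔
      (∀ i ∈ Finset.Icc 1 n, ∀ v ∈ Finset.Icc 1 n,
        ∃ j ∈ Finset.Icc 1 n, M i j = v ∧ ∀ k ∈ Finset.Icc 1 n, M i k = v → k = j) ∧
      (∀ a ∈ Finset.Icc 1 n, ∀ b ∈ Finset.Icc 1 n, a ≠ b →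
        ∃ p ∈ Finset.Icc 1 n ×ˢ Finset.Icc 1 (n - 1), (M p.1 p.2 = a ∧ M p.1 (p.2 + 1) = b) ∧
          ∀ q ∈ Finset.Icc 1 n ×ˢ Finset.Icc 1 (n - 1),
            M q.1 q.2 = a ∧ M q.1 (q.2 + 1) = b → q = p) := by
  have mem_product_and (p : ℕ × ℕ) (P : Prop) :
      (p.1 ∈ Finset.Icc 1 n ∧ p.2 ∈ Finset.Icc 1 (n - 1) ∧ P) ↔
        p ∈ Finset.Icc 1 n ×ˢ Finset.Icc 1 (n - 1) ∧ P := by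
    rw [Finset.mem_product, and_assoc]
  simp only [IsHarmonic, mem_product_and, existsUnique_mem_and_iff]

theorem isHarmonic_B6 : IsHarmonic 6 B6 :=
  isHarmonic_iff.mpr (by decide)

theorem row_eq_comp_of_iso {n : ℕ} {M N : ℕ → ℕ → ℕ} {σ τ : ℕ → ℕ}
    (hM₁ : ∀ j ∈ Set.Icc 1 n, M 1 j = j) (hn : 1 ≤ n)
    (h : ∀ i ∈ Set.Icc 1 n, ∀ j ∈ Set.Icc 1 n, N (τ i) j = σ (M i j))
    {i : ℕ} (hi : i ∈ Set.Icc 1 n) (hMi : ∀ j ∈ Set.Icc 1 n, M i j ∈ Set.Icc 1 n) :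
    ∀ j ∈ Set.Icc 1 n, N (τ i) j = N (τ 1) (M i j) := by
  have hσ : ∀ x ∈ Set.Icc 1 n, σ x = N (τ 1) x := fun x hx => by
    rw [h 1 ⟨le_rfl, hn⟩ x hx, hM₁ x hx]
  intro j hj
  rw [h i hi j hj, hσ _ (hMi j hj)]

theorem not_exists_rows_B6_comp_A6_row_two :
    ¬ ∃ r₁ ∈ Finset.Icc 1 6, ∃ r₂ ∈ Finset.Icc 1 6,
      ∀ j ∈ Finset.Icc 1 6, B6 r₂ j = B6 r₁ (A6 2 j) := by
  decide

/-- `B6` is harmonic and not isomorphic to `A_μ^(6)`: no global relabeling `σ`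
together with a row permutation `τ` transforms `A6` into `B6`. -/
theorem B6_harmonic_not_iso_A6 :
    IsHarmonic 6 B6 ∧
    ¬ ∃ σ τ : ℕ → ℕ,
        Set.BijOn σ (Set.Icc 1 6) (Set.Icc 1 6) ∧
        Set.BijOn τ (Set.Icc 1 6) (Set.Icc 1 6) ∧
        ∀ i ∈ Set.Icc 1 6, ∀ j ∈ Set.Icc 1 6, B6 (τ i) j = σ (A6 i j) := by
  refine ⟨isHarmonic_B6, ?_⟩
  rintro ⟨σ, τ, -, hτ, h⟩
  have hA6_row_one : ∀ j ∈ Set.Icc 1 6, A6 1 j = j := by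
    rintro j ⟨hj₁, hj₆⟩; interval_cases j <;> rfl
  have hA6_row_two : ∀ j ∈ Set.Icc 1 6, A6 2 j ∈ Set.Icc 1 6 := by
    rintro j ⟨hj₁, hj₆⟩; interval_cases j <;> decide
  have hrow := row_eq_comp_of_iso hA6_row_one (by norm_num) h (by norm_num) hA6_row_two
  refine not_exists_rows_B6_comp_A6_row_two
    ⟨τ 1, ?_, τ 2, ?_, fun j hj => hrow j (by simpa using hj)⟩
  · simpa using hτ.mapsTo (show 1 ∈ Set.Icc 1 6 by norm_num)
  · simpa using hτ.mapsTo (show 2 ∈ Set.Icc 1 6 by norm_num)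
end

section
/- Every harmonic matrix of order 4 is isomorphic (via global relabeling of symbols and row permutation) to the matrix with rows (1,2,3,4), (2,4,1,3), (3,1,4,2), (4,3,2,1). -/
def A4 : ℕ → ℕ → ℕ := fun i j =>
  (([[1,2,3,4],[2,4,1,3],[3,1,4,2],[4,3,2,1]] : List (List ℕ)).getD (i-1) []).getD (j-1) 0

/-!
Relabel the symbols so that the first row reads `1 2 3 4`. Every other row is then a permutation
avoiding the adjacent pairs `12`, `23`, `34`, and no two rows share an adjacent pair; a short
exhaustive search shows that the only such rows are `2413`, `3142`, `4321`, which are the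
remaining rows of `A4`. Since each row of `A4` is determined by its first entry, the row
permutation is read off the first column of the relabelled matrix.
-/

open Set

instance List.decidableDisjoint {α : Type*} [DecidableEq α] (l₁ l₂ : List α) :
    Decidable (l₁.Disjoint l₂) :=
  decidable_of_iff _ List.disjoint_left.symm

theorem List.Nodup.map_perm_self_iff_bijOn {α : Type*} {l : List α} {f : α → α}
    (hl : l.Nodup) : (l.map f).Perm l ↔ BijOn f {x | x ∈ l} {x | x ∈ l} := by
  constructor
  · intro h
    refine ⟨fun x hx => h.subset (List.mem_map_of_mem hx), ?_, fun y hy => ?_⟩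
    · exact List.inj_on_of_nodup_map (h.nodup_iff.2 hl)
    · simpa using h.symm.subset hy
  · intro h
    refine (List.perm_ext_iff_of_nodup (hl.map_on fun x hx y hy => h.injOn hx hy) hl).2 ?_
    intro y
    simp only [List.mem_map]
    exact ⟨fun ⟨x, hx, hxy⟩ => hxy ▸ h.mapsTo hx, fun hy => h.surjOn hy⟩

theorem List.map_range'_one_perm_iff_bijOn {n : ℕ} {f : ℕ → ℕ} :
    ((List.range' 1 n).map f).Perm (List.range' 1 n) ↔ BijOn f (Icc 1 n) (Icc 1 n) := by
  have hset : {x | x ∈ List.range' 1 n} = Icc 1 n := by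
    ext x
    exact List.mem_range'_1.trans (by rw [mem_Icc]; omega)
  rw [(List.nodup_range' (s := 1) (n := n)).map_perm_self_iff_bijOn, hset]

def adjacentPairs {α : Type*} (l : List α) : List (α × α) := l.zip l.tail

theorem adjacentPairs_map_range' {α : Type*} (f : ℕ → α) (s k : ℕ) :
    adjacentPairs ((List.range' s k).map f) =
      (List.range' s (k - 1)).map fun j => (f j, f (j + 1)) := by
  induction k generalizing s with
  | zero => rfl
  | succ k ih =>
    cases k with
    | zero => rfl
    | succ k =>
      have hcons : ∀ (a b : α) (l : List α),
          adjacentPairs (a :: b :: l) = (a, b) :: adjacentPairs (b :: l) := fun _ _ _ => rfl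
      rw [List.range'_succ (s := s) (n := k + 1), List.map_cons,
        List.range'_succ (s := s + 1) (n := k), List.map_cons, hcons, ← List.map_cons,
        ← List.range'_succ, ih]
      rfl

abbrev AdjacentDisjoint {α : Type*} (r r' : List α) : Prop :=
  (adjacentPairs r).Disjoint (adjacentPairs r')

def rowList (n : ℕ) (M : ℕ → ℕ → ℕ) (i : ℕ) : List ℕ := (List.range' 1 n).map (M i)

theorem rowList_getD {n : ℕ} {M : ℕ → ℕ → ℕ} {i j : ℕ} (hj : j ∈ Icc 1 n) (d : ℕ) :
    (rowList n M i).getD (j - 1) d = M i j := by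
  obtain ⟨hj₁, hjn⟩ := hj
  rw [rowList, List.getD_eq_getElem _ _ (by rw [List.length_map, List.length_range']; omega),
    List.getElem_map, List.getElem_range']
  congr 1
  omega

namespace IsHarmonic

variable {n : ℕ} {M : ℕ → ℕ → ℕ}

theorem bijOn_row (hM : IsHarmonic n M) {i : ℕ} (hi : i ∈ Icc 1 n) :
    BijOn (M i) (Icc 1 n) (Icc 1 n) := by
  choose! col hcol using fun v (hv : v ∈ Icc 1 n) =>
    (hM.1 i (Finset.mem_Icc.2 hi) v (Finset.mem_Icc.2 hv)).exists
  have hcol_mapsTo : MapsTo col (Icc 1 n) (Icc 1 n) := fun v hv => Finset.mem_Icc.1 (hcol v hv).1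
  have hcol_bijOn : BijOn col (Icc 1 n) (Icc 1 n) := by
    refine ((finite_Icc 1 n).injOn_iff_bijOn_of_mapsTo hcol_mapsTo).1 fun v hv w hw h => ?_
    rw [← (hcol v hv).2, ← (hcol w hw).2, h]
  have hmapsTo : MapsTo (M i) (Icc 1 n) (Icc 1 n) := by
    intro j hj
    obtain ⟨v, hv, rfl⟩ := hcol_bijOn.surjOn hj
    rwa [(hcol v hv).2]
  exact ((finite_Icc 1 n).surjOn_iff_bijOn_of_mapsTo hmapsTo).1
    fun v hv => ⟨col v, hcol_mapsTo hv, (hcol v hv).2⟩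

theorem relabel (hM : IsHarmonic n M) {σ : ℕ → ℕ} (hσ : BijOn σ (Icc 1 n) (Icc 1 n)) :
    IsHarmonic n fun i j => σ (M i j) := by
  have hentry {i j : ℕ} (hi : i ∈ Icc 1 n) (hj : j ∈ Icc 1 n) : M i j ∈ Icc 1 n :=
    (hM.bijOn_row hi).mapsTo hj
  constructor
  · intro i hi v hv
    obtain ⟨w, hw, rfl⟩ := hσ.surjOn (Finset.mem_Icc.1 hv)
    refine (existsUnique_congr fun j => and_congr_right fun hj => ?_).1
      (hM.1 i hi w (Finset.mem_Icc.2 hw))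
    exact (hσ.injOn.eq_iff (hentry (Finset.mem_Icc.1 hi) (Finset.mem_Icc.1 hj)) hw).symm
  · intro a ha b hb hab
    obtain ⟨a₀, ha₀, rfl⟩ := hσ.surjOn (Finset.mem_Icc.1 ha)
    obtain ⟨b₀, hb₀, rfl⟩ := hσ.surjOn (Finset.mem_Icc.1 hb)
    refine (existsUnique_congr fun p => ?_).1
      (hM.2 a₀ (Finset.mem_Icc.2 ha₀) b₀ (Finset.mem_Icc.2 hb₀) (ne_of_apply_ne σ hab))
    refine and_congr_right fun hp₁ => and_congr_right fun hp₂ => ?_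
    rw [Finset.mem_Icc] at hp₁ hp₂
    rw [hσ.injOn.eq_iff (hentry hp₁ ⟨hp₂.1, by omega⟩) ha₀,
      hσ.injOn.eq_iff (hentry hp₁ ⟨by omega, by omega⟩) hb₀]

theorem rowList_perm (hM : IsHarmonic n M) {i : ℕ} (hi : i ∈ Icc 1 n) :
    (rowList n M i).Perm (List.range' 1 n) :=
  List.map_range'_one_perm_iff_bijOn.2 (hM.bijOn_row hi)

theorem adjacentDisjoint_rowList (hM : IsHarmonic n M) {i i' : ℕ} (hi : i ∈ Icc 1 n)
    (hi' : i' ∈ Icc 1 n) (hne : i ≠ i') : AdjacentDisjoint (rowList n M i) (rowList n M i') := by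
  simp only [AdjacentDisjoint, rowList, adjacentPairs_map_range', List.disjoint_left, List.mem_map,
    List.mem_range'_1]
  rintro _ ⟨j, hj, rfl⟩ ⟨j', hj', hpair⟩
  obtain ⟨hM_a, hM_b⟩ := Prod.ext_iff.1 hpair
  have hrow := hM.bijOn_row hi
  have hab : M i j ≠ M i (j + 1) := fun h => by
    have := hrow.injOn ⟨hj.1, by omega⟩ ⟨by omega, by omega⟩ h
    omega
  have hpos := (hM.2 _ (Finset.mem_Icc.2 (hrow.mapsTo ⟨hj.1, by omega⟩)) _
    (Finset.mem_Icc.2 (hrow.mapsTo ⟨by omega, by omega⟩)) hab).unique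
    (y₁ := (i', j')) (y₂ := (i, j))
    ⟨Finset.mem_Icc.2 hi', Finset.mem_Icc.2 ⟨hj'.1, by omega⟩, hM_a, hM_b⟩
    ⟨Finset.mem_Icc.2 hi, Finset.mem_Icc.2 ⟨hj.1, by omega⟩, rfl, rfl⟩
  exact hne (congrArg Prod.fst hpos).symm

end IsHarmonic

def A4rows : List (List ℕ) := [[1, 2, 3, 4], [2, 4, 1, 3], [3, 1, 4, 2], [4, 3, 2, 1]]

theorem A4_eq_of_mem_A4rows {r : List ℕ} (hr : r ∈ A4rows) (j : ℕ) :
    A4 (r.getD 0 0) j = r.getD (j - 1) 0 := by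
  have key : ∀ r ∈ A4rows, A4rows.getD (r.getD 0 0 - 1) [] = r := by decide
  rw [A4, ← A4rows, key r hr]

-- Each hypothesis follows the quantifier that completes it, so the kernel's search prunes early.
theorem perm_A4rows_of_adjacentDisjoint :
    ∀ r₂ ∈ (List.range' 1 4).permutations', AdjacentDisjoint (List.range' 1 4) r₂ →
    ∀ r₃ ∈ (List.range' 1 4).permutations', AdjacentDisjoint (List.range' 1 4) r₃ →
      AdjacentDisjoint r₂ r₃ →
    ∀ r₄ ∈ (List.range' 1 4).permutations', AdjacentDisjoint (List.range' 1 4) r₄ →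
      AdjacentDisjoint r₂ r₄ → AdjacentDisjoint r₃ r₄ →
    [List.range' 1 4, r₂, r₃, r₄].Perm A4rows := by
  decide +kernel

theorem IsHarmonic.map_rowList_perm_A4rows {N : ℕ → ℕ → ℕ} (hN : IsHarmonic 4 N)
    (hN₁ : ∀ j ∈ Icc 1 4, N 1 j = j) : ((List.range' 1 4).map (rowList 4 N)).Perm A4rows := by
  have hrow₁ : rowList 4 N 1 = List.range' 1 4 := by
    simp [rowList, List.range', hN₁]
  have hperm {i : ℕ} (hi : i ∈ Icc 1 4) : rowList 4 N i ∈ (List.range' 1 4).permutations' :=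
    List.mem_permutations'.2 (hN.rowList_perm hi)
  obtain ⟨h₁, h₂, h₃, h₄⟩ : (1 : ℕ) ∈ Icc 1 4 ∧ (2 : ℕ) ∈ Icc 1 4 ∧ (3 : ℕ) ∈ Icc 1 4 ∧
      (4 : ℕ) ∈ Icc 1 4 := by norm_num
  have h := perm_A4rows_of_adjacentDisjoint
    _ (hperm h₂) (hrow₁ ▸ hN.adjacentDisjoint_rowList h₁ h₂ (by norm_num))
    _ (hperm h₃) (hrow₁ ▸ hN.adjacentDisjoint_rowList h₁ h₃ (by norm_num))
      (hN.adjacentDisjoint_rowList h₂ h₃ (by norm_num))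
    _ (hperm h₄) (hrow₁ ▸ hN.adjacentDisjoint_rowList h₁ h₄ (by norm_num))
      (hN.adjacentDisjoint_rowList h₂ h₄ (by norm_num))
      (hN.adjacentDisjoint_rowList h₃ h₄ (by norm_num))
  rwa [← hrow₁] at h

/-- Every harmonic matrix of order 4 is isomorphic to `A_μ^(4)`. -/
theorem harmonic4_unique (M : ℕ → ℕ → ℕ) (hM : IsHarmonic 4 M) :
    ∃ σ τ : ℕ → ℕ,
      Set.BijOn σ (Set.Icc 1 4) (Set.Icc 1 4) ∧
      Set.BijOn τ (Set.Icc 1 4) (Set.Icc 1 4) ∧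
      ∀ i ∈ Set.Icc 1 4, ∀ j ∈ Set.Icc 1 4, A4 (τ i) j = σ (M i j) := by
  have hM₁ := hM.bijOn_row (i := 1) (by norm_num)
  set σ := Function.invFunOn (M 1) (Icc 1 4)
  have hσ : BijOn σ (Icc 1 4) (Icc 1 4) := hM₁.symm hM₁.invOn_invFunOn.symm
  set N : ℕ → ℕ → ℕ := fun i j => σ (M i j)
  have hN : IsHarmonic 4 N := hM.relabel hσ
  have hrows := hN.map_rowList_perm_A4rows fun j hj => hM₁.injOn.leftInvOn_invFunOn hj
  -- Row `k` of `A4` is the one starting with `k`.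
  refine ⟨σ, fun i => N i 1, hσ, ?_, fun i hi j hj => ?_⟩
  · have hcol := hrows.map fun r : List ℕ => r.getD 0 0
    exact List.map_range'_one_perm_iff_bijOn.1 hcol
  · have hmem : rowList 4 N i ∈ A4rows :=
      hrows.subset (List.mem_map_of_mem (List.mem_range'_1.2 ⟨hi.1, Nat.lt_succ_of_le hi.2⟩))
    calc A4 (N i 1) j = A4 ((rowList 4 N i).getD 0 0) j :=
          congrArg (A4 · j) (rowList_getD ⟨le_rfl, by norm_num⟩ 0).symm
      _ = (rowList 4 N i).getD (j - 1) 0 := A4_eq_of_mem_A4rows hmem j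
      _ = N i j := rowList_getD hj 0
end

section
/- For even n, the n rows generated by iterating β_π on the identity vector, namely row i given by j ↦ β_π^{i-1}(j), are pairwise distinct permutations of {1,...,n}, and row n/2 + 1 is the reversal permutation j ↦ β_π^{n/2}(j) = n + 1 - j, i.e. the (n/2 + 1)-th row is (n+1-1, n+1-2, ..., n+1-n). -/
namespace BetaPiAux

/-- Element at position `m % n` on the cycle `1,2,4,…,n,n-1,n-3,…,3`. -/
def elt (n m : ℕ) : ℕ :=
  if m % n = 0 then 1 else if m % n ≤ n / 2 then 2 * (m % n) else 2 * (n - m % n) + 1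

/-- Position of `j` on the cycle. -/
def pos (n j : ℕ) : ℕ :=
  if j = 1 then 0 else if Even j then j / 2 else n - (j - 1) / 2

lemma elt_congr {n a b : ℕ} (h : a % n = b % n) : elt n a = elt n b := by
  unfold elt; rw [h]

lemma elt_mem {n : ℕ} (hn : 2 ≤ n) (m : ℕ) : elt n m ∈ Set.Icc 1 n := by
  have hr : m % n < n := Nat.mod_lt _ (by omega)
  unfold elt
  split_ifs <;> constructor <;> omega

lemma elt_inj_mod {n : ℕ} (hn : 2 ≤ n) {a b : ℕ} (h : elt n a = elt n b) :
    a % n = b % n := by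
  have hra : a % n < n := Nat.mod_lt _ (by omega)
  have hrb : b % n < n := Nat.mod_lt _ (by omega)
  unfold elt at h
  split_ifs at h <;> omega

lemma step {n : ℕ} (hn : 2 ≤ n) (heven : Even n) (m : ℕ) :
    betaPi n (elt n m) = elt n (m + 1) := by
  have h2 : n % 2 = 0 := Nat.even_iff.mp heven
  have hr : m % n < n := Nat.mod_lt _ (by omega)
  have hm1 : (m + 1) % n = (m % n + 1) % n := by
    conv_lhs => rw [Nat.add_mod, Nat.mod_eq_of_lt (show (1:ℕ) < n by omega)]
  set r := m % n with hrdef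
  rcases Nat.lt_or_ge (r + 1) n with hlt | hge
  · -- (m+1) % n = r + 1
    have hm1' : (m + 1) % n = r + 1 := by rw [hm1, Nat.mod_eq_of_lt hlt]
    unfold elt betaPi
    rw [hm1']
    rcases Nat.eq_zero_or_pos r with h0 | hpos
    · -- elt = 1, beta = 2 ; r+1 = 1
      have hm0 : m % n = 0 := h0
      simp only [hm0, h0]
      norm_num
      omega
    rcases Nat.lt_or_ge r (n / 2) with hr2 | hr2
    · -- elt = 2r, 0 < r < n/2, beta = 2r + 2
      rw [if_neg (by omega : ¬ r = 0), if_pos (by omega : r ≤ n / 2)]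
      rw [if_neg (by omega : ¬ 2 * r = 1), if_neg (by omega : ¬ 2 * r = n),
        if_pos (even_two_mul r)]
      rw [if_neg (by omega : ¬ r + 1 = 0), if_pos (by omega : r + 1 ≤ n / 2)]
      ring
    rcases Nat.eq_or_lt_of_le hr2 with he | hgt
    · -- r = n/2, elt = n, beta = n - 1
      rw [if_neg (by omega : ¬ r = 0), if_pos (le_of_eq he.symm)]
      have h2r : 2 * r = n := by omega
      rw [h2r, if_neg (by omega : ¬ n = 1), if_pos rfl]
      rw [if_neg (by omega : ¬ r + 1 = 0), if_neg (by omega : ¬ r + 1 ≤ n / 2)]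
      omega
    · -- n/2 < r < n - 1, elt = 2(n-r)+1 ≥ 3, beta = 2(n-r)-1
      rw [if_neg (by omega : ¬ r = 0), if_neg (by omega : ¬ r ≤ n / 2)]
      have hnr : 2 ≤ n - r := by omega
      rw [if_neg (by omega : ¬ 2 * (n - r) + 1 = 1),
        if_neg (by omega : ¬ 2 * (n - r) + 1 = n),
        if_neg (by simp [Nat.even_add_one, Nat.even_iff] )]
      rw [if_neg (by omega : ¬ r + 1 = 0), if_neg (by omega : ¬ r + 1 ≤ n / 2)]
      omega
  · -- r + 1 = n, i.e. r = n - 1 ; (m+1) % n = 0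
    have hrn : r = n - 1 := by omega
    have hm1' : (m + 1) % n = 0 := by
      rw [hm1, show r + 1 = n by omega, Nat.mod_self]
    unfold elt betaPi
    rw [hm1', if_pos rfl]
    rcases Nat.eq_or_lt_of_le hn with h2' | h3
    · -- n = 2, r = 1 = n/2, elt = 2, beta = n - 1 = 1
      rw [if_neg (by omega : ¬ r = 0), if_pos (by omega : r ≤ n / 2)]
      rw [if_neg (by omega : ¬ 2 * r = 1), if_pos (by omega : 2 * r = n)]
      omega
    · -- n ≥ 4 (even, > 2), r = n - 1 > n/2, elt = 3, beta = 1
      rw [if_neg (by omega : ¬ r = 0), if_neg (by omega : ¬ r ≤ n / 2)]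
      have h3' : 2 * (n - r) + 1 = 3 := by omega
      rw [h3', if_neg (by omega : ¬ (3:ℕ) = 1), if_neg (by omega : ¬ (3:ℕ) = n),
        if_neg (by decide : ¬ Even 3)]

lemma iter {n : ℕ} (hn : 2 ≤ n) (heven : Even n) (k m : ℕ) :
    (betaPi n)^[k] (elt n m) = elt n (m + k) := by
  induction k with
  | zero => simp
  | succ k ih =>
      rw [Function.iterate_succ_apply', ih, step hn heven, Nat.add_assoc]

lemma pos_lt {n : ℕ} (hn : 2 ≤ n) {j : ℕ} (hj : j ∈ Set.Icc 1 n) : pos n j < n := by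
  obtain ⟨hj1, hj2⟩ := hj
  unfold pos
  split_ifs with h1 h2
  · omega
  · omega
  · have hodd : j % 2 = 1 := Nat.odd_iff.mp (Nat.not_even_iff_odd.mp h2)
    omega

lemma elt_pos {n : ℕ} (hn : 2 ≤ n) (heven : Even n) {j : ℕ} (hj : j ∈ Set.Icc 1 n) :
    elt n (pos n j) = j := by
  have h2 : n % 2 = 0 := Nat.even_iff.mp heven
  obtain ⟨hj1, hj2⟩ := hj
  unfold elt pos
  by_cases h1 : j = 1
  · subst h1
    rw [if_pos rfl]
    simp [Nat.zero_mod]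
  rw [if_neg h1]
  by_cases he : Even j
  · have hje : j % 2 = 0 := Nat.even_iff.mp he
    rw [if_pos he]
    have hlt : j / 2 < n := by omega
    rw [Nat.mod_eq_of_lt hlt]
    rw [if_neg (by omega : ¬ j / 2 = 0), if_pos (by omega : j / 2 ≤ n / 2)]
    omega
  · have hjo : j % 2 = 1 := Nat.odd_iff.mp (Nat.not_even_iff_odd.mp he)
    rw [if_neg he]
    have hlt : n - (j - 1) / 2 < n := by omega
    rw [Nat.mod_eq_of_lt hlt]
    rw [if_neg (by omega : ¬ n - (j - 1) / 2 = 0),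
      if_neg (by omega : ¬ n - (j - 1) / 2 ≤ n / 2)]
    omega

lemma half {n : ℕ} (hn : 2 ≤ n) (heven : Even n) {j : ℕ} (hj : j ∈ Set.Icc 1 n) :
    elt n (pos n j + n / 2) = n + 1 - j := by
  have h2 : n % 2 = 0 := Nat.even_iff.mp heven
  obtain ⟨hj1, hj2⟩ := hj
  unfold elt pos
  by_cases h1 : j = 1
  · subst h1
    rw [if_pos rfl]
    have hlt : 0 + n / 2 < n := by omega
    rw [Nat.mod_eq_of_lt hlt]
    rw [if_neg (by omega : ¬ 0 + n / 2 = 0), if_pos (by omega : 0 + n / 2 ≤ n / 2)]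
    omega
  rw [if_neg h1]
  by_cases he : Even j
  · have hje : j % 2 = 0 := Nat.even_iff.mp he
    rw [if_pos he]
    by_cases hjn : j = n
    · subst hjn
      have : j / 2 + j / 2 = j := by omega
      rw [this, Nat.mod_self, if_pos rfl]
      omega
    · have hlt : j / 2 + n / 2 < n := by omega
      rw [Nat.mod_eq_of_lt hlt]
      rw [if_neg (by omega : ¬ j / 2 + n / 2 = 0),
        if_neg (by omega : ¬ j / 2 + n / 2 ≤ n / 2)]
      omega
  · have hjo : j % 2 = 1 := Nat.odd_iff.mp (Nat.not_even_iff_odd.mp he)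
    rw [if_neg he]
    have hjn : j ≤ n - 1 := by omega
    have hq : (j - 1) / 2 ≤ n / 2 - 1 := by omega
    have hq1 : 1 ≤ (j - 1) / 2 := by omega
    have hsum : n - (j - 1) / 2 + n / 2 = n + (n / 2 - (j - 1) / 2) := by omega
    rw [hsum, Nat.add_mod_left]
    have hs : n / 2 - (j - 1) / 2 < n := by omega
    rw [Nat.mod_eq_of_lt hs]
    rw [if_neg (by omega : ¬ n / 2 - (j - 1) / 2 = 0),
      if_pos (by omega : n / 2 - (j - 1) / 2 ≤ n / 2)]
    omega

lemma row {n : ℕ} (hn : 2 ≤ n) (heven : Even n) (k : ℕ) {j : ℕ} (hj : j ∈ Set.Icc 1 n) :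
    (betaPi n)^[k] j = elt n (pos n j + k) := by
  conv_lhs => rw [← elt_pos hn heven hj]
  exact iter hn heven k _

end BetaPiAux

open BetaPiAux in
/-- For even `n ≥ 2`, the rows `M(i,·) = β_π^{i-1}` are pairwise distinct
permutations of `{1,…,n}`, and row `n/2 + 1` is `j ↦ n + 1 - j`. -/
theorem betaPi_rows (n : ℕ) (hn : 2 ≤ n) (heven : Even n) :
    (∀ i ∈ Set.Icc 1 n, Set.BijOn ((betaPi n)^[i - 1]) (Set.Icc 1 n) (Set.Icc 1 n)) ∧
    (∀ i₁ ∈ Set.Icc 1 n, ∀ i₂ ∈ Set.Icc 1 n, i₁ ≠ i₂ →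
      ∃ j ∈ Set.Icc 1 n, (betaPi n)^[i₁ - 1] j ≠ (betaPi n)^[i₂ - 1] j) ∧
    (∀ j ∈ Set.Icc 1 n, (betaPi n)^[n / 2 + 1 - 1] j = n + 1 - j) := by
  refine ⟨?_, ?_, ?_⟩
  · intro i _
    refine ⟨?_, ?_, ?_⟩
    · intro j hj
      rw [row hn heven _ hj]
      exact elt_mem hn _
    · intro a ha b hb h
      rw [row hn heven _ ha, row hn heven _ hb] at h
      have hmod := elt_inj_mod hn h
      have hmod' : pos n a % n = pos n b % n :=
        Nat.ModEq.add_right_cancel' _ hmod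
      have hab : pos n a = pos n b := by
        rwa [Nat.mod_eq_of_lt (pos_lt hn ha), Nat.mod_eq_of_lt (pos_lt hn hb)] at hmod'
      calc a = elt n (pos n a) := (elt_pos hn heven ha).symm
        _ = elt n (pos n b) := by rw [hab]
        _ = b := elt_pos hn heven hb
    · intro y hy
      set k := i - 1 with hk
      refine ⟨elt n (pos n y + (n - k % n)), elt_mem hn _, ?_⟩
      rw [iter hn heven]
      have hdm := Nat.div_add_mod k n
      have hlt : k % n < n := Nat.mod_lt _ (by omega)
      have heq : pos n y + (n - k % n) + k = pos n y + n * (k / n) + n := by omega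
      calc elt n (pos n y + (n - k % n) + k)
          = elt n (pos n y) := by
            apply elt_congr
            rw [heq, Nat.add_mod_right, Nat.add_mul_mod_self_left]
        _ = y := elt_pos hn heven hy
  · intro i₁ hi₁ i₂ hi₂ hne
    refine ⟨1, ⟨le_refl 1, by omega⟩, ?_⟩
    have h1 : (1 : ℕ) ∈ Set.Icc 1 n := ⟨le_refl 1, by omega⟩
    rw [row hn heven _ h1, row hn heven _ h1]
    have hp1 : pos n 1 = 0 := by simp [pos]
    rw [hp1]
    intro h
    have hmod := elt_inj_mod hn h
    obtain ⟨hi₁1, hi₁n⟩ := hi₁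
    obtain ⟨hi₂1, hi₂n⟩ := hi₂
    rw [Nat.mod_eq_of_lt (by omega : 0 + (i₁ - 1) < n),
      Nat.mod_eq_of_lt (by omega : 0 + (i₂ - 1) < n)] at hmod
    omega
  · intro j hj
    have : n / 2 + 1 - 1 = n / 2 := by omega
    rw [this, row hn heven _ hj]
    exact half hn heven hj
end
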